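/- arXiv:math/0112127 — 8 statements merged into one kernel-verified Lean document; each statement's English description precedes it below -/
import Mathlib

section
/- Let k, r be positive integers with r ≥ 2 and gcd(k+1, r-1) = 1, and set β = -(r-1)/(k+1). If λ is a (k,r,n)-admissible partition, then for all 1 ≤ i < j ≤ n, (j-i)·β + λ_i - λ_j ≠ 0. -/
/-!
Clearing denominators, a vanishing expression means `(j - i)(r - 1) = (λ_i - λ_j)(k + 1)`.
Since `k + 1` and `r - 1` are coprime, `j - i = m (k + 1)` and `λ_i - λ_j = m (r - 1)` for some
`m ≥ 1`. But `m` steps of length `k` from `i` stay at or before `j`, so admissibility and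
monotonicity give `λ_i - λ_j ≥ m r > m (r - 1)`.
-/

theorem exists_eq_mul_of_mul_eq_mul_of_isCoprime {R : Type*} [CommRing R] [IsDomain R]
    {a b x y : R} (hab : IsCoprime a b) (ha : a ≠ 0) (h : x * b = y * a) :
    ∃ m, x = m * a ∧ y = m * b := by
  obtain ⟨m, rfl⟩ : a ∣ x := hab.dvd_of_dvd_mul_right ⟨y, by rw [h, mul_comm]⟩
  refine ⟨m, mul_comm a m, mul_left_cancel₀ ha ?_⟩
  linear_combination -h

theorem add_mul_le_of_forall_add_le {f : ℕ → ℕ} {k r n i : ℕ}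
    (hf : ∀ i, 1 ≤ i → i + k ≤ n → f (i + k) + r ≤ f i) (hi : 1 ≤ i) :
    ∀ m, i + m * k ≤ n → f (i + m * k) + m * r ≤ f i
  | 0, _ => by simp
  | m + 1, hm => by
    have hstep := hf (i + m * k) (by omega) (by rw [add_assoc, ← Nat.succ_mul]; exact hm)
    have hprev := add_mul_le_of_forall_add_le hf hi m (by nlinarith)
    rw [Nat.succ_mul, ← add_assoc, Nat.succ_mul]
    omega

theorem admissible_denominator_nonzero_general (k r n : ℕ) (hr : 2 ≤ r)
    (hcop : Nat.Coprime (k + 1) (r - 1))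
    (β : ℚ) (hβ : β = -((r : ℚ) - 1) / ((k : ℚ) + 1))
    (lam : ℕ → ℕ)
    (hmono : ∀ i, 1 ≤ i → lam (i + 1) ≤ lam i)
    (hadm : ∀ i, 1 ≤ i → i + k ≤ n → lam (i + k) + r ≤ lam i)
    (i j : ℕ) (hi : 1 ≤ i) (hij : i < j) (hjn : j ≤ n) :
    ((j : ℚ) - (i : ℚ)) * β + (lam i : ℚ) - (lam j : ℚ) ≠ 0 := by
  intro hE
  have hZ : ((j : ℤ) - i) * ((r : ℤ) - 1) = ((lam i : ℤ) - lam j) * ((k : ℤ) + 1) := by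
    rw [hβ] at hE
    field_simp at hE
    have hQ : ((j : ℚ) - i) * ((r : ℚ) - 1) = ((lam i : ℚ) - lam j) * ((k : ℚ) + 1) := by
      linarith
    exact_mod_cast hQ
  have hcopZ : IsCoprime ((k : ℤ) + 1) ((r : ℤ) - 1) := by
    simpa [Nat.cast_sub (by omega : 1 ≤ r)] using Nat.isCoprime_iff_coprime.mpr hcop
  obtain ⟨m, hjm, hlm⟩ := exists_eq_mul_of_mul_eq_mul_of_isCoprime hcopZ (by positivity) hZ
  lift m to ℕ using by nlinarith
  have hj : j = i + m * (k + 1) := by zify; linarith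
  have hchain := add_mul_le_of_forall_add_le hadm hi m (by nlinarith)
  have hlamj : lam j ≤ lam (i + m * k) :=
    antitoneOn_nat_Ici_of_succ_le hmono (show 1 ≤ _ by omega) (show 1 ≤ j by omega)
      (by nlinarith)
  have hm : 1 ≤ m := by nlinarith
  zify at hchain hlamj
  nlinarith

/-- For β = -(r-1)/(k+1) with gcd(k+1,r-1)=1, r ≥ 2, and λ a
(k,r,n)-admissible partition, (j-i)·β + λ_i - λ_j ≠ 0 for all 1 ≤ i < j ≤ n. -/
theorem admissible_denominator_nonzero (k r n : ℕ) (hk : 1 ≤ k) (hr : 2 ≤ r)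
    (hcop : Nat.Coprime (k + 1) (r - 1))
    (β : ℚ) (hβ : β = -((r : ℚ) - 1) / ((k : ℚ) + 1))
    (lam : ℕ → ℕ)
    (hmono : ∀ i, 1 ≤ i → lam (i + 1) ≤ lam i)
    (hadm : ∀ i, 1 ≤ i → i + k ≤ n → lam (i + k) + r ≤ lam i)
    (i j : ℕ) (hi : 1 ≤ i) (hij : i < j) (hjn : j ≤ n) :
    ((j : ℚ) - (i : ℚ)) * β + (lam i : ℚ) - (lam j : ℚ) ≠ 0 :=
  admissible_denominator_nonzero_general k r n hr hcop β hβ lam hmono hadm i j hi hij hjn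
end

section
/- Let k, r be positive integers with r ≥ 2 and gcd(k+1, r-1) = 1, and set β = -(r-1)/(k+1). If λ is a (k,r,n)-admissible partition and λ' is the conjugate partition, then for all 1 ≤ i ≤ n and 1 ≤ j ≤ λ_i, (λ'_j - i + 1)·β + λ_i - j ≠ 0. -/
/-!
Clearing denominators, a vanishing hook value means `(λᵢ - j)(k+1) = (λ'ⱼ - i + 1)(r-1)`.
Since `k+1` and `r-1` are coprime, both sides equal `t(k+1)(r-1)` for some `t ≥ 1`, so
`λᵢ = j + t(r-1)` and row `i + tk` still meets column `j`. But applying admissibility `t` times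
gives `λ_{i+tk} ≤ λᵢ - tr = j - t < j`.
-/

open Finset

def IsAdmissible (k r n : ℕ) (lam : ℕ → ℕ) : Prop :=
  ∀ i, 1 ≤ i → i + k ≤ n → lam (i + k) + r ≤ lam i

def conjugate (n : ℕ) (lam : ℕ → ℕ) (j : ℕ) : ℕ :=
  #{m ∈ Icc 1 n | j ≤ lam m}

theorem IsAdmissible.add_mul_le {k r n : ℕ} {lam : ℕ → ℕ} (hadm : IsAdmissible k r n lam)
    {a : ℕ} (ha : 1 ≤ a) : ∀ t, a + t * k ≤ n → lam (a + t * k) + t * r ≤ lam a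
  | 0, _ => by simp
  | t + 1, h => by
    have hsplit : a + (t + 1) * k = a + t * k + k := by ring
    rw [hsplit] at h ⊢
    have hstep := hadm (a + t * k) (by omega) h
    have ih := hadm.add_mul_le ha t (by omega)
    rw [add_one_mul]
    omega

theorem conjugate_le (n : ℕ) (lam : ℕ → ℕ) (j : ℕ) : conjugate n lam j ≤ n :=
  (card_filter_le _ _).trans (by simp)

theorem le_conjugate_iff {n : ℕ} {lam : ℕ → ℕ} (hlam : AntitoneOn lam {x | 1 ≤ x})
    {j m : ℕ} (hm : 1 ≤ m) (hmn : m ≤ n) : m ≤ conjugate n lam j ↔ j ≤ lam m := by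
  constructor
  · intro hle
    by_contra! hlt
    have hsub : {x ∈ Icc 1 n | j ≤ lam x} ⊆ Icc 1 (m - 1) := by
      intro x hx
      simp only [mem_filter, mem_Icc] at hx ⊢
      refine ⟨hx.1.1, ?_⟩
      by_contra! hxm
      have := hlam hm hx.1.1 (by omega : m ≤ x)
      omega
    have hcard := card_le_card hsub
    rw [Nat.card_Icc] at hcard
    unfold conjugate at hle
    omega
  · intro hj
    calc m = #(Icc 1 m) := by simp
      _ ≤ conjugate n lam j := card_le_card fun x hx => by
        simp only [mem_Icc, mem_filter] at hx ⊢
        exact ⟨⟨hx.1, hx.2.trans hmn⟩, hj.trans (hlam hx.1 hm hx.2)⟩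

theorem mul_eq_mul_of_hook_eq_zero {k r c l i j : ℕ} (hr : 1 ≤ r) (hi : i ≤ c + 1) (hj : j ≤ l)
    (h : ((c : ℚ) - i + 1) * (-((r : ℚ) - 1) / ((k : ℚ) + 1)) + l - j = 0) :
    (l - j) * (k + 1) = (c + 1 - i) * (r - 1) := by
  have hQ : ((l : ℚ) - j) * (k + 1) = (c - i + 1) * (r - 1) := by
    field_simp at h
    linarith
  qify [hr, hi, hj]
  linarith

theorem Nat.Coprime.exists_eq_mul_of_mul_eq_mul {p q a b : ℕ} (hpq : p.Coprime q) (hp : 0 < p)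
    (h : a * p = b * q) : ∃ t, a = t * q ∧ b = t * p := by
  obtain ⟨t, rfl⟩ := hpq.dvd_of_dvd_mul_right ⟨a, by rw [← h, mul_comm]⟩
  refine ⟨t, Nat.eq_of_mul_eq_mul_right hp ?_, mul_comm _ _⟩
  rw [h]
  ring

theorem admissible_hook_nonzero_general (k r n : ℕ) (hr : 2 ≤ r)
    (hcop : Nat.Coprime (k + 1) (r - 1))
    (β : ℚ) (hβ : β = -((r : ℚ) - 1) / ((k : ℚ) + 1))
    (lam : ℕ → ℕ)
    (hmono : ∀ i, 1 ≤ i → lam (i + 1) ≤ lam i)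
    (hadm : ∀ i, 1 ≤ i → i + k ≤ n → lam (i + k) + r ≤ lam i)
    (conj : ℕ → ℕ)
    (hconj : ∀ j, conj j = ((Finset.Icc 1 n).filter (fun m => j ≤ lam m)).card)
    (i j : ℕ) (hi1 : 1 ≤ i) (hin : i ≤ n) (hj : j ≤ lam i) :
    ((conj j : ℚ) - (i : ℚ) + 1) * β + (lam i : ℚ) - (j : ℚ) ≠ 0 := by
  intro h
  obtain rfl : conj = conjugate n lam := funext hconj
  subst hβ
  have hlam := antitoneOn_nat_Ici_of_succ_le hmono
  have hi : i ≤ conjugate n lam j := (le_conjugate_iff hlam hi1 hin).2 hj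
  obtain ⟨t, hl, hc⟩ := hcop.exists_eq_mul_of_mul_eq_mul (by omega)
    (mul_eq_mul_of_hook_eq_zero (by omega) (by omega) hj h)
  have ht1 : 1 ≤ t := Nat.pos_of_ne_zero (by rintro rfl; rw [zero_mul] at hc; omega)
  rw [mul_add_one] at hc
  have hrow : i + t * k ≤ conjugate n lam j := by omega
  have hrow_le : i + t * k ≤ n := hrow.trans (conjugate_le n lam j)
  have hmeets : j ≤ lam (i + t * k) := (le_conjugate_iff hlam (by omega) hrow_le).1 hrow
  have hdrop := IsAdmissible.add_mul_le hadm hi1 t hrow_le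
  have ht : t * r = t * (r - 1) + t := by rw [← mul_add_one, Nat.sub_add_cancel (by omega)]
  omega

/-- For β = -(r-1)/(k+1) and λ a (k,r,n)-admissible partition
with conjugate λ', one has (λ'_j - i + 1)·β + λ_i - j ≠ 0 for all nodes
(i,j) of λ. -/
theorem admissible_hook_nonzero (k r n : ℕ) (hk : 1 ≤ k) (hr : 2 ≤ r)
    (hcop : Nat.Coprime (k + 1) (r - 1))
    (β : ℚ) (hβ : β = -((r : ℚ) - 1) / ((k : ℚ) + 1))
    (lam : ℕ → ℕ)
    (hmono : ∀ i, 1 ≤ i → lam (i + 1) ≤ lam i)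
    (hadm : ∀ i, 1 ≤ i → i + k ≤ n → lam (i + k) + r ≤ lam i)
    (conj : ℕ → ℕ)
    (hconj : ∀ j, conj j = ((Finset.Icc 1 n).filter (fun m => j ≤ lam m)).card)
    (i j : ℕ) (hi1 : 1 ≤ i) (hin : i ≤ n) (hj1 : 1 ≤ j) (hj : j ≤ lam i) :
    ((conj j : ℚ) - (i : ℚ) + 1) * β + (lam i : ℚ) - (j : ℚ) ≠ 0 :=
  admissible_hook_nonzero_general k r n hr hcop β hβ lam hmono hadm conj hconj i j hi1 hin hj
end

section
/- Let k, r be positive integers with r ≥ 2 and gcd(k+1, r-1) = 1, and set β = -(r-1)/(k+1). If λ is a (k,r,n)-admissible partition and j is an index with λ_j < λ_{j-1}, then for all i < j, (j-i)·β + λ_i - λ_j ≠ 1. -/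
/-!
Write `d = j - i` and `m = λ_i - λ_j`. Clearing denominators, `d β + m = 1` reads
`d (r - 1) = (k + 1)(m - 1)`, so coprimality forces `d = t (k + 1)` and `m = t (r - 1) + 1`
with `t ≥ 1`. Iterating admissibility `t` times from `i` gives
`λ_{j-1} ≤ λ_{i + t k} ≤ λ_i - t r = λ_j + 1 - t ≤ λ_j`, contradicting `λ_j < λ_{j-1}`.
-/

theorem add_mul_add_mul_le_of_admissible {k r n : ℕ} {lam : ℕ → ℕ}
    (hadm : ∀ i, 1 ≤ i → i + k ≤ n → lam (i + k) + r ≤ lam i) (t : ℕ) {i : ℕ} (hi : 1 ≤ i)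
    (hn : i + t * k ≤ n) : lam (i + t * k) + t * r ≤ lam i := by
  induction t with
  | zero => simp
  | succ t ih =>
    rw [Nat.succ_mul, ← add_assoc] at hn ⊢
    have hstep := hadm (i + t * k) (by omega) hn
    have hprev := ih (by omega)
    rw [Nat.succ_mul]
    omega

theorem exists_eq_mul_of_mul_neg_div_add_eq_one {k r d m : ℕ} (hr : 1 ≤ r)
    (hcop : Nat.Coprime (k + 1) (r - 1))
    (h : (d : ℚ) * (-((r : ℚ) - 1) / ((k : ℚ) + 1)) + m = 1) :
    ∃ t, d = (k + 1) * t ∧ m = t * (r - 1) + 1 := by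
  have hnat : d * (r - 1) + (k + 1) = (k + 1) * m := by
    have hk : (k : ℚ) + 1 ≠ 0 := by positivity
    field_simp at h
    exact_mod_cast (by push_cast [Nat.cast_sub hr]; linarith :
      ((d * (r - 1) + (k + 1) : ℕ) : ℚ) = ((k + 1) * m : ℕ))
  obtain ⟨t, rfl⟩ : k + 1 ∣ d :=
    hcop.dvd_of_dvd_mul_right ((Nat.dvd_add_left (dvd_refl _)).mp ⟨m, hnat⟩)
  refine ⟨t, rfl, Nat.eq_of_mul_eq_mul_left (Nat.add_one_pos k) ?_⟩
  rw [← hnat]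
  ring

theorem admissible_shifted_nonzero_general (k r n : ℕ) (hr : 2 ≤ r)
    (hcop : Nat.Coprime (k + 1) (r - 1))
    (β : ℚ) (hβ : β = -((r : ℚ) - 1) / ((k : ℚ) + 1))
    (lam : ℕ → ℕ)
    (hmono : ∀ i, 1 ≤ i → lam (i + 1) ≤ lam i)
    (hadm : ∀ i, 1 ≤ i → i + k ≤ n → lam (i + k) + r ≤ lam i)
    (j : ℕ) (hjn : j ≤ n) (hdesc : lam j < lam (j - 1)) :
    ∀ i, 1 ≤ i → i < j →
      ((j : ℚ) - (i : ℚ)) * β + (lam i : ℚ) - (lam j : ℚ) ≠ 1 := by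
  intro i hi hij heq
  subst hβ
  have hanti : AntitoneOn lam {x | 1 ≤ x} := antitoneOn_nat_Ici_of_succ_le hmono
  have hji : lam j ≤ lam i := hanti hi (show 1 ≤ j by omega) hij.le
  obtain ⟨t, hd, hm⟩ := exists_eq_mul_of_mul_neg_div_add_eq_one (d := j - i) (m := lam i - lam j)
    (by omega) hcop (by push_cast [Nat.cast_sub hij.le, Nat.cast_sub hji]; linarith)
  have hdt : (k + 1) * t = t * k + t := by ring
  have ht : 1 ≤ t := Nat.pos_of_ne_zero (by rintro rfl; omega)
  have hchain := add_mul_add_mul_le_of_admissible hadm t hi (by omega)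
  have hmid : lam (j - 1) ≤ lam (i + t * k) := hanti (show 1 ≤ i + t * k by omega) (show 1 ≤ j - 1 by omega) (by omega)
  have htr : t * r = t * (r - 1) + t := by
    rw [← Nat.mul_add_one, Nat.sub_add_cancel (by omega)]
  omega

/-- For β = -(r-1)/(k+1), λ a (k,r,n)-admissible partition and
j an index with λ_j < λ_{j-1}, one has (j-i)·β + λ_i - λ_j ≠ 1 for all i < j. -/
theorem admissible_shifted_nonzero (k r n : ℕ) (hk : 1 ≤ k) (hr : 2 ≤ r)
    (hcop : Nat.Coprime (k + 1) (r - 1))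
    (β : ℚ) (hβ : β = -((r : ℚ) - 1) / ((k : ℚ) + 1))
    (lam : ℕ → ℕ)
    (hmono : ∀ i, 1 ≤ i → lam (i + 1) ≤ lam i)
    (hadm : ∀ i, 1 ≤ i → i + k ≤ n → lam (i + k) + r ≤ lam i)
    (j : ℕ) (hj2 : 2 ≤ j) (hjn : j ≤ n) (hdesc : lam j < lam (j - 1)) :
    ∀ i, 1 ≤ i → i < j →
      ((j : ℚ) - (i : ℚ)) * β + (lam i : ℚ) - (lam j : ℚ) ≠ 1 :=
  admissible_shifted_nonzero_general k r n hr hcop β hβ lam hmono hadm j hjn hdesc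
end

section
/- Let k, r be positive integers with gcd(k+1, r-1) = 1 and r ≥ 2. Suppose m is a positive integer with m ≡ k (mod k+1) and ((m+1)/(k+1))·(r-1) ≥ ⌊m/k⌋·r - 1, where (m+1)/(k+1) is an integer. Then m = k. -/
/-!
Write `m = (k + 1) t + k`. Then `(m + 1) / (k + 1) = t + 1` and `⌊m / k⌋ = t + 1 + ⌊t / k⌋`, so the
inequality becomes `⌊t / k⌋ r + t ≤ 0`, forcing `t = 0`.
-/

namespace Nat

theorem exists_eq_succ_mul_add_of_mod_eq {m k : ℕ} (hmod : m % (k + 1) = k % (k + 1)) :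
    ∃ t, m = (k + 1) * t + k := by
  refine ⟨m / (k + 1), ?_⟩
  have h := Nat.div_add_mod m (k + 1)
  rw [hmod, Nat.mod_eq_of_lt k.lt_succ_self] at h
  exact h.symm

theorem succ_mul_add_succ_div (k t : ℕ) : ((k + 1) * t + k + 1) / (k + 1) = t + 1 := by
  rw [show (k + 1) * t + k + 1 = (t + 1) * (k + 1) by ring]
  exact Nat.mul_div_cancel _ k.succ_pos

theorem succ_mul_add_div {k : ℕ} (t : ℕ) (hk : 0 < k) :
    ((k + 1) * t + k) / k = t / k + (t + 1) := by
  rw [show (k + 1) * t + k = t + (t + 1) * k by ring]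
  exact Nat.add_mul_div_right _ _ hk

end Nat

theorem eq_zero_of_add_succ_mul_sub_one_le {q t r : ℕ}
    (h : ((q + (t + 1) : ℕ) : ℤ) * r - 1 ≤ ((t + 1 : ℕ) : ℤ) * ((r : ℤ) - 1)) : t = 0 := by
  have hqr : (0 : ℤ) ≤ q * r := by positivity
  push_cast at h
  linarith

theorem key_numerical_inequality_general (k r m : ℕ) (hk : 1 ≤ k)
    (hmod : m % (k + 1) = k % (k + 1))
    (hineq : ((m / k : ℕ) : ℤ) * (r : ℤ) - 1 ≤ (((m + 1) / (k + 1) : ℕ) : ℤ) * ((r : ℤ) - 1)) :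
    m = k := by
  obtain ⟨t, rfl⟩ := Nat.exists_eq_succ_mul_add_of_mod_eq hmod
  rw [Nat.succ_mul_add_succ_div, Nat.succ_mul_add_div t hk] at hineq
  rw [eq_zero_of_add_succ_mul_sub_one_le hineq]
  ring

/-- If m > 0, m ≡ k (mod k+1), and ((m+1)/(k+1))·(r-1) ≥ ⌊m/k⌋·r - 1,
then m = k. -/
theorem key_numerical_inequality (k r m : ℕ) (hk : 1 ≤ k) (hr : 2 ≤ r)
    (hcop : Nat.Coprime (k + 1) (r - 1)) (hm : 0 < m)
    (hmod : m % (k + 1) = k % (k + 1))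
    (hineq : ((m / k : ℕ) : ℤ) * (r : ℤ) - 1 ≤ (((m + 1) / (k + 1) : ℕ) : ℤ) * ((r : ℤ) - 1)) :
    m = k :=
  key_numerical_inequality_general k r m hk hmod hineq
end

section
/- The Dunkl operators ∇_i = ∂_i + β Σ_{j≠i} (1/(x_i - x_j))(1 - K_{ij}) pairwise commute: [∇_i, ∇_j] = 0 for all i, j. -/
/-!
For `i ≠ j`, `g i j` is the divided difference `(x_i - x_j)⁻¹ (1 - K_ij)`, determined by its
defining identity since `x_i - x_j` is a non-zero-divisor. Cancelling that factor shows that it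
is linear, that `π (g i j) π⁻¹ = g (π i) (π j)` for permutations `π`, and that it commutes with
`∂_k` for `k ∉ {i, j}` and with `∂_i + ∂_j`. Expanding `[∇_i, ∇_j]`, the part linear in `β`
cancels by these facts. In the part quadratic in `β`, commutators of divided differences with
disjoint indices vanish, and what is left is a sum over `m ∉ {i, j}` of three commutators
involving only `i, j, m`; each such sum is a combination of two instances of the three-term
relation `g a b ∘ g b c + g b c ∘ g c a + g c a ∘ g a b = 0`. That relation is checked after
multiplying by `(x_a - x_b)(x_b - x_c)(x_a - x_c)`, which turns each term into a combination of
the six permutations of the argument by `S_3`.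
-/

namespace MvPolynomial

variable {R σ : Type*}

theorem pderiv_pderiv_comm [CommRing R] (i j : σ) (p : MvPolynomial σ R) :
    pderiv i (pderiv j p) = pderiv j (pderiv i p) := by
  have h : ⁅pderiv i, pderiv j⁆ = (0 : Derivation R (MvPolynomial σ R) (MvPolynomial σ R)) :=
    derivation_ext fun k => by
      classical
      rw [Derivation.commutator_apply, pderiv_X, pderiv_X]
      simp [Pi.single_apply, apply_ite]
  have := congr($h p)
  rwa [Derivation.commutator_apply, Derivation.zero_apply, sub_eq_zero] at this

theorem X_sub_X_ne_zero [CommRing R] [Nontrivial R] {i j : σ} (hij : i ≠ j) :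
    (X i - X j : MvPolynomial σ R) ≠ 0 :=
  sub_ne_zero.2 (X_injective.ne hij)

/-- `g i j f = (x_i - x_j)⁻¹ (f - K_ij f)` for `i ≠ j`; nothing is imposed on `g i i`. -/
def IsDividedDifference [CommRing R] [DecidableEq σ]
    (g : σ → σ → MvPolynomial σ R → MvPolynomial σ R) : Prop :=
  ∀ i j f, (X i - X j) * g i j f = f - rename (Equiv.swap i j) f

namespace IsDividedDifference

variable [CommRing R] [IsDomain R] [DecidableEq σ]
  {g : σ → σ → MvPolynomial σ R → MvPolynomial σ R} (hg : IsDividedDifference g)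
  {i j : σ}
include hg

theorem map_add (hij : i ≠ j) (p q : MvPolynomial σ R) :
    g i j (p + q) = g i j p + g i j q :=
  mul_left_cancel₀ (X_sub_X_ne_zero hij) <| by rw [mul_add, hg, hg, hg, _root_.map_add]; ring

theorem map_smul (hij : i ≠ j) (c : R) (p : MvPolynomial σ R) :
    g i j (c • p) = c • g i j p :=
  mul_left_cancel₀ (X_sub_X_ne_zero hij) <| by rw [mul_smul_comm, hg, hg, _root_.map_smul, smul_sub]

theorem map_neg (hij : i ≠ j) (p : MvPolynomial σ R) : g i j (-p) = -g i j p :=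
  mul_left_cancel₀ (X_sub_X_ne_zero hij) <| by rw [mul_neg, hg, hg, _root_.map_neg]; ring

theorem map_sum (hij : i ≠ j) {ι : Type*} (s : Finset ι) (p : ι → MvPolynomial σ R) :
    g i j (∑ l ∈ s, p l) = ∑ l ∈ s, g i j (p l) :=
  mul_left_cancel₀ (X_sub_X_ne_zero hij) <| by
    simp only [hg i j, Finset.mul_sum, _root_.map_sum, Finset.sum_sub_distrib]

theorem apply_comm_eq_neg (hij : i ≠ j) (p : MvPolynomial σ R) : g j i p = -g i j p :=
  mul_left_cancel₀ (X_sub_X_ne_zero hij) <| by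
    have hji := hg j i p
    rw [Equiv.swap_comm] at hji
    linear_combination hg i j p - hji

theorem rename_apply (e : Equiv.Perm σ) (hij : i ≠ j) (p : MvPolynomial σ R) :
    rename e (g i j p) = g (e i) (e j) (rename e p) :=
  mul_left_cancel₀ (X_sub_X_ne_zero (e.injective.ne hij)) <| by
    rw [hg, ← rename_X e i, ← rename_X e j, ← map_sub, ← map_mul, hg, map_sub, rename_rename,
      rename_rename, ← Equiv.Perm.coe_mul, ← Equiv.Perm.coe_mul, Equiv.mul_swap_eq_swap_mul]

theorem derivation_apply_comm (hij : i ≠ j)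
    (D : Derivation R (MvPolynomial σ R) (MvPolynomial σ R)) (hD : D (X i - X j) = 0)
    (hDK : ∀ p, D (rename (Equiv.swap i j) p) = rename (Equiv.swap i j) (D p))
    (p : MvPolynomial σ R) : D (g i j p) = g i j (D p) :=
  mul_left_cancel₀ (X_sub_X_ne_zero hij) <| by
    have := D.leibniz (X i - X j) (g i j p)
    rw [hD, smul_zero, add_zero, smul_eq_mul, hg, _root_.map_sub, hDK] at this
    rw [← this, hg]

theorem map_mul_of_rename_swap_eq (hij : i ≠ j) {q : MvPolynomial σ R}
    (hq : rename (Equiv.swap i j) q = q) (p : MvPolynomial σ R) :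
    g i j (q * p) = q * g i j p :=
  mul_left_cancel₀ (X_sub_X_ne_zero hij) <| by
    have hqp : rename (Equiv.swap i j) (q * p) = q * rename (Equiv.swap i j) p := by
      rw [_root_.map_mul, hq]
    linear_combination hg i j (q * p) - q * hg i j p - hqp

theorem pderiv_apply_comm_of_ne (hij : i ≠ j) {k : σ} (hki : k ≠ i) (hkj : k ≠ j)
    (p : MvPolynomial σ R) : pderiv k (g i j p) = g i j (pderiv k p) := by
  refine hg.derivation_apply_comm hij (pderiv k) ?_ (fun q => ?_) p
  · rw [_root_.map_sub, pderiv_X_of_ne hki.symm, pderiv_X_of_ne hkj.symm, sub_zero]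
  · conv_lhs => rw [← Equiv.swap_apply_of_ne_of_ne hki hkj]
    exact pderiv_rename (Equiv.injective _) k q

theorem pderiv_add_pderiv_apply (hij : i ≠ j) (p : MvPolynomial σ R) :
    pderiv i (g i j p) + pderiv j (g i j p) = g i j (pderiv i p + pderiv j p) := by
  refine hg.derivation_apply_comm hij (pderiv i + pderiv j) ?_ (fun q => ?_) p
  · simp [pderiv_X_of_ne hij, pderiv_X_of_ne hij.symm]
  · have hi := pderiv_rename (Equiv.swap i j).injective j q
    have hj := pderiv_rename (Equiv.swap i j).injective i q
    rw [Equiv.swap_apply_right] at hi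
    rw [Equiv.swap_apply_left] at hj
    rw [Derivation.add_apply, Derivation.add_apply, hi, hj, _root_.map_add, add_comm]

theorem apply_apply_comm {k l : σ} (hij : i ≠ j) (hkl : k ≠ l)
    (hki : k ≠ i) (hkj : k ≠ j) (hli : l ≠ i) (hlj : l ≠ j) (f : MvPolynomial σ R) :
    g i j (g k l f) = g k l (g i j f) :=
  mul_left_cancel₀ (X_sub_X_ne_zero hij) <| by
    have hK : rename (Equiv.swap i j) (g k l f) = g k l (rename (Equiv.swap i j) f) := by
      rw [hg.rename_apply _ hkl, Equiv.swap_apply_of_ne_of_ne hki hkj,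
        Equiv.swap_apply_of_ne_of_ne hli hlj]
    have hX : rename (Equiv.swap k l) (X i - X j : MvPolynomial σ R) = X i - X j := by
      rw [_root_.map_sub, rename_X, rename_X, Equiv.swap_apply_of_ne_of_ne hki.symm hli.symm,
        Equiv.swap_apply_of_ne_of_ne hkj.symm hlj.symm]
    rw [← hg.map_mul_of_rename_swap_eq hkl hX, hg, hg, hK, sub_eq_add_neg, sub_eq_add_neg,
      hg.map_add hkl, hg.map_neg hkl]

theorem mul_apply_apply {a b c : σ} (hbc : b ≠ c) (hac : a ≠ c) (f : MvPolynomial σ R) :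
    (X a - X b) * (X b - X c) * (X a - X c) * g a b (g b c f) =
      (X a - X c) * (f - rename (Equiv.swap b c) f) -
        (X b - X c) * (rename (Equiv.swap a b) f -
          rename (Equiv.swap a c * Equiv.swap a b : Equiv.Perm σ) f) := by
  have hab_bc : (X a - X b) * g a b (g b c f) = g b c f - g a c (rename (Equiv.swap a b) f) := by
    rw [hg, hg.rename_apply _ hbc, Equiv.swap_apply_right,
      Equiv.swap_apply_of_ne_of_ne hac.symm hbc.symm]
  have hac_ab := hg a c (rename (Equiv.swap a b) f)
  rw [rename_rename, ← Equiv.Perm.coe_mul] at hac_ab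
  linear_combination (X b - X c) * (X a - X c) * hab_bc + (X a - X c) * hg b c f -
    (X b - X c) * hac_ab

theorem cyclic_sum_apply_apply_eq_zero {a b c : σ} (hab : a ≠ b) (hbc : b ≠ c)
    (hac : a ≠ c) (f : MvPolynomial σ R) :
    g a b (g b c f) + g b c (g c a f) + g c a (g a b f) = 0 := by
  have cycle : ∀ {x y z : σ}, x ≠ y → y ≠ z → x ≠ z →
      Equiv.swap y x * Equiv.swap y z = Equiv.swap x z * Equiv.swap x y := by
    intro x y z _ _ _
    ext w
    simp only [Equiv.Perm.mul_apply, Equiv.swap_apply_def]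
    grind
  have e₁ := hg.mul_apply_apply hbc hac f
  have e₂ := hg.mul_apply_apply hac.symm hab.symm f
  have e₃ := hg.mul_apply_apply hab hbc.symm f
  rw [cycle hab hbc hac] at e₂
  rw [cycle hbc hac.symm hab.symm, cycle hab hbc hac, Equiv.swap_comm c a] at e₃
  rw [Equiv.swap_comm c a] at e₂
  refine mul_left_cancel₀ (mul_ne_zero (mul_ne_zero (X_sub_X_ne_zero hab) (X_sub_X_ne_zero hbc))
    (X_sub_X_ne_zero hac)) ?_
  linear_combination e₁ + e₂ + e₃

theorem commutator_sum_eq_zero {m : σ} (hij : i ≠ j) (him : i ≠ m) (hjm : j ≠ m)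
    (f : MvPolynomial σ R) :
    (g i j (g j m f) - g j m (g i j f)) + (g i m (g j i f) - g j i (g i m f)) +
      (g i m (g j m f) - g j m (g i m f)) = 0 := by
  have h₁ := hg.cyclic_sum_apply_apply_eq_zero hij hjm him f
  have h₂ := hg.cyclic_sum_apply_apply_eq_zero him hjm.symm hij f
  simp only [hg.apply_comm_eq_neg hij, hg.apply_comm_eq_neg him, hg.apply_comm_eq_neg hjm,
    hg.map_neg him, hg.map_neg hjm] at h₁ h₂ ⊢
  linear_combination h₁ - h₂

variable [Fintype σ]

theorem sum_sum_comm (hij : i ≠ j) (f : MvPolynomial σ R) :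
    ∑ k ∈ Finset.univ.erase i, ∑ l ∈ Finset.univ.erase j, g i k (g j l f) =
      ∑ l ∈ Finset.univ.erase j, ∑ k ∈ Finset.univ.erase i, g j l (g i k f) := by
  set c : σ → σ → MvPolynomial σ R := fun k l => g i k (g j l f) - g j l (g i k f) with hc
  set s := (Finset.univ.erase i).erase j
  have hjE : j ∈ Finset.univ.erase i := Finset.mem_erase.2 ⟨hij.symm, Finset.mem_univ j⟩
  have hiE : i ∈ Finset.univ.erase j := Finset.mem_erase.2 ⟨hij, Finset.mem_univ i⟩
  have hmem : ∀ m ∈ s, i ≠ m ∧ j ≠ m := fun m hm => by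
    simp only [s, Finset.mem_erase] at hm
    exact ⟨hm.2.1.symm, hm.1.symm⟩
  have row_j : ∑ l ∈ Finset.univ.erase j, c j l = ∑ m ∈ s, c j m := by
    rw [← Finset.add_sum_erase _ _ hiE, Finset.erase_right_comm]
    simp only [hc, hg.apply_comm_eq_neg hij, hg.map_neg hij, sub_neg_eq_add, neg_add_cancel,
      zero_add]
    rfl
  -- for `m ∉ {i, j}` only `l = i` and `l = m` survive: all other index pairs are disjoint
  have row_m : ∀ m ∈ s, ∑ l ∈ Finset.univ.erase j, c m l = c m i + c m m := fun m hm =>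
    Finset.sum_eq_add_of_mem i m hiE (Finset.mem_erase.2 ⟨(hmem m hm).2.symm, Finset.mem_univ m⟩)
      (hmem m hm).1 fun l hl hlim => by
        rw [hc, sub_eq_zero]
        exact hg.apply_apply_comm (hmem m hm).1 (Finset.ne_of_mem_erase hl).symm hij.symm
          (hmem m hm).2 hlim.1 hlim.2 f
  rw [Finset.sum_comm (s := Finset.univ.erase j), ← sub_eq_zero, ← Finset.sum_sub_distrib]
  simp_rw [← Finset.sum_sub_distrib]
  rw [← Finset.add_sum_erase _ _ hjE, row_j, Finset.sum_congr rfl row_m, ← Finset.sum_add_distrib]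
  exact Finset.sum_eq_zero fun m hm => by
    rw [← add_assoc]
    exact hg.commutator_sum_eq_zero hij (hmem m hm).1 (hmem m hm).2 f

theorem sum_pderiv_apply_sub_apply_pderiv (hij : i ≠ j) (f : MvPolynomial σ R) :
    ∑ l ∈ Finset.univ.erase j, (pderiv i (g j l f) - g j l (pderiv i f)) =
      g i j (pderiv i f) - pderiv i (g i j f) := by
  rw [Finset.sum_eq_single_of_mem i (Finset.mem_erase.2 ⟨hij, Finset.mem_univ i⟩)
    fun l hl hli => by
      rw [hg.pderiv_apply_comm_of_ne (Finset.ne_of_mem_erase hl).symm hij hli.symm, sub_self]]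
  rw [hg.apply_comm_eq_neg hij, hg.apply_comm_eq_neg hij, _root_.map_neg]
  ring

theorem sum_pderiv_apply_add_sum_apply_pderiv (hij : i ≠ j) (f : MvPolynomial σ R) :
    ∑ l ∈ Finset.univ.erase j, pderiv i (g j l f) + ∑ k ∈ Finset.univ.erase i, g i k (pderiv j f) =
      ∑ k ∈ Finset.univ.erase i, pderiv j (g i k f) +
        ∑ l ∈ Finset.univ.erase j, g j l (pderiv i f) := by
  have h₁ := hg.sum_pderiv_apply_sub_apply_pderiv hij f
  have h₂ := hg.sum_pderiv_apply_sub_apply_pderiv hij.symm f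
  rw [Finset.sum_sub_distrib] at h₁ h₂
  rw [hg.apply_comm_eq_neg hij, hg.apply_comm_eq_neg hij, _root_.map_neg] at h₂
  linear_combination h₁ - h₂ - hg.pderiv_add_pderiv_apply hij f -
    hg.map_add hij (pderiv i f) (pderiv j f)

end IsDividedDifference

variable [CommRing R] [DecidableEq σ] [Fintype σ]

noncomputable def dunklOperator (g : σ → σ → MvPolynomial σ R → MvPolynomial σ R) (β : R)
    (i : σ) (f : MvPolynomial σ R) : MvPolynomial σ R :=
  pderiv i f + β • ∑ j ∈ Finset.univ.erase i, g i j f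

namespace IsDividedDifference

variable [IsDomain R] {g : σ → σ → MvPolynomial σ R → MvPolynomial σ R}
  (hg : IsDividedDifference g)
include hg

theorem dunklOperator_dunklOperator (β : R) (i j : σ) (f : MvPolynomial σ R) :
    dunklOperator g β i (dunklOperator g β j f) =
      pderiv i (pderiv j f) +
        β • (∑ l ∈ Finset.univ.erase j, pderiv i (g j l f) +
          ∑ k ∈ Finset.univ.erase i, g i k (pderiv j f)) +
        (β * β) • ∑ k ∈ Finset.univ.erase i, ∑ l ∈ Finset.univ.erase j, g i k (g j l f) := by
  have hexpand : ∀ k ∈ Finset.univ.erase i,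
      g i k (pderiv j f + β • ∑ l ∈ Finset.univ.erase j, g j l f) =
        g i k (pderiv j f) + β • ∑ l ∈ Finset.univ.erase j, g i k (g j l f) := fun k hk => by
    have hik := (Finset.ne_of_mem_erase hk).symm
    rw [hg.map_add hik, hg.map_smul hik, hg.map_sum hik]
  simp only [dunklOperator, _root_.map_add, Derivation.map_smul, _root_.map_sum,
    Finset.sum_congr rfl hexpand, Finset.sum_add_distrib, ← Finset.smul_sum]
  module

theorem dunklOperator_comm (β : R) (i j : σ) (f : MvPolynomial σ R) :
    dunklOperator g β i (dunklOperator g β j f) = dunklOperator g β j (dunklOperator g β i f) := by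
  rcases eq_or_ne i j with rfl | hij
  · rfl
  rw [hg.dunklOperator_dunklOperator, hg.dunklOperator_dunklOperator, pderiv_pderiv_comm,
    hg.sum_pderiv_apply_add_sum_apply_pderiv hij, hg.sum_sum_comm hij]

end IsDividedDifference

end MvPolynomial

open MvPolynomial

/-- The Dunkl operators ∇_i = ∂_i + β Σ_{j≠i} (x_i - x_j)⁻¹(1 - K_{ij})
pairwise commute. Here g i j f denotes the polynomial (x_i - x_j)⁻¹(f - K_{ij}f). -/
theorem dunkl_operators_commute (n : ℕ) (β : ℂ)
    (g : Fin n → Fin n → MvPolynomial (Fin n) ℂ → MvPolynomial (Fin n) ℂ)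
    (hg : ∀ i j f, (X i - X j) * g i j f = f - rename (Equiv.swap i j) f)
    (N : Fin n → MvPolynomial (Fin n) ℂ → MvPolynomial (Fin n) ℂ)
    (hN : ∀ i f, N i f = pderiv i f + β • ∑ j ∈ Finset.univ.erase i, g i j f) :
    ∀ i j f, N i (N j f) = N j (N i f) := by
  obtain rfl : N = dunklOperator g β := funext fun i => funext (hN i)
  exact IsDividedDifference.dunklOperator_comm hg β
end

section
/- The space F^{(k)}_n of symmetric polynomials vanishing when k+1 variables coincide is stable under the operators l_m = Σ_{j=1}^n x_j^{m+1} ∂_j for all m ≥ -1. -/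
/-!
Let `g` collapse the indices `0, …, k` to `0`. Vanishing on the diagonal `x₀ = ⋯ = x_k` says that
the polynomial `P ∘ g` is zero, so by the chain rule `∑_{g j = i} (∂_j P) ∘ g = 0` for every `i`.
At a diagonal point `x` we have `x ∘ g = x`, and the coefficients `x_j ^ (m + 1)` are constant on
the fibres of `g`, so `l_m P (x)` splits into these vanishing fibre sums.
-/

open MvPolynomial

section
variable {R σ τ : Type*} [CommSemiring R] [Fintype σ] [DecidableEq τ]

theorem pderiv_rename_eq_sum_fiber (g : σ → τ) (p : MvPolynomial σ R) (i : τ) :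
    pderiv i (rename g p) = ∑ j with g j = i, rename g (pderiv j p) := by
  classical
  induction p using MvPolynomial.induction_on with
  | C a => simp
  | add p q hp hq => simp [hp, hq, Finset.sum_add_distrib]
  | mul_X p s hp =>
    simp [hp, Pi.single_apply, apply_ite (rename g), Finset.sum_add_distrib, Finset.mul_sum,
      Finset.sum_ite_eq]

theorem sum_mul_eval_pderiv_eq_zero_of_rename_eq_zero {g : σ → τ} {p : MvPolynomial σ R}
    (hp : rename g p = 0) (w x : τ → R) :
    ∑ j, w (g j) * eval (x ∘ g) (pderiv j p) = 0 := by
  have hfiber (i : τ) : ∑ j with g j = i, eval (x ∘ g) (pderiv j p) = 0 := by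
    simpa [hp, eval_rename, eq_comm] using congrArg (eval x) (pderiv_rename_eq_sum_fiber g p i)
  rw [← Finset.sum_fiberwise_of_maps_to (t := Finset.univ.image g)
    fun j _ => Finset.mem_image_of_mem g (Finset.mem_univ j)]
  refine Finset.sum_eq_zero fun i _ => ?_
  rw [← mul_zero (w i), ← hfiber i, Finset.mul_sum]
  exact Finset.sum_congr rfl fun j hj => by rw [(Finset.mem_filter.1 hj).2]

end

theorem vanishing_space_stable_under_lm_general (k n : ℕ)
    (m : ℤ)
    (P : MvPolynomial (Fin n) ℂ)
    (hvan : ∀ x : Fin n → ℂ,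
      (∀ a b : Fin n, (a : ℕ) ≤ k → (b : ℕ) ≤ k → x a = x b) → eval x P = 0) :
    ∀ x : Fin n → ℂ,
      (∀ a b : Fin n, (a : ℕ) ≤ k → (b : ℕ) ≤ k → x a = x b) →
      eval x (∑ j : Fin n, X j ^ (m + 1).toNat * pderiv j P) = 0 := by
  intro x hx
  let g : Fin n → Fin n := fun j => if (j : ℕ) ≤ k then ⟨0, j.pos⟩ else j
  have hPg : rename g P = 0 := MvPolynomial.funext fun y => by
    rw [eval_rename, map_zero]
    exact hvan _ fun a b ha hb => by simp [g, ha, hb]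
  have hxg (j : Fin n) : x (g j) = x j := by
    by_cases hj : (j : ℕ) ≤ k
    · exact hx _ _ (by simp [g, hj]) hj
    · simp [g, hj]
  simpa [hxg, show x ∘ g = x from funext hxg] using
    sum_mul_eval_pderiv_eq_zero_of_rename_eq_zero hPg (fun i => x i ^ (m + 1).toNat) x

/-- The space F^{(k)}_n of symmetric polynomials vanishing when
k+1 variables coincide is stable under l_m = Σ_j x_j^{m+1} ∂_j for m ≥ -1. -/
theorem vanishing_space_stable_under_lm (k n : ℕ) (hk : 1 ≤ k)
    (m : ℤ) (hm : -1 ≤ m)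
    (P : MvPolynomial (Fin n) ℂ) (hsym : P.IsSymmetric)
    (hvan : ∀ x : Fin n → ℂ,
      (∀ a b : Fin n, (a : ℕ) ≤ k → (b : ℕ) ≤ k → x a = x b) → eval x P = 0) :
    ∀ x : Fin n → ℂ,
      (∀ a b : Fin n, (a : ℕ) ≤ k → (b : ℕ) ≤ k → x a = x b) →
      eval x (∑ j : Fin n, X j ^ (m + 1).toNat * pderiv j P) = 0 :=
  vanishing_space_stable_under_lm_general k n m P hvan
end

section
/- Let λ be a (k,r,k+1)-admissible partition in n = k+1 variables with r ≥ 2 and gcd(k+1,r-1)=1, and let β = -(r-1)/(k+1). Then in the specialization formula P_λ(1,...,1;β) = ∏_{(i,j)∈λ} ((n-i+1)β + j - 1)/((λ'_j - i + 1)β + λ_i - j), the factor in the numerator corresponding to the node (1, r) vanishes, while no factor of the denominator vanishes; hence P_λ(1,...,1;β(k,r)) = 0. -/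
/-!
At β = -(r-1)/(k+1) the numerator factor of the node (1,r) is (k+1)β + r - 1 = 0. A denominator
factor (c - i + 1)β + λ_i - j, with c = λ'_j, vanishes iff (c - i + 1)(r - 1) = (λ_i - j)(k + 1).
Since 1 ≤ c - i + 1 ≤ k + 1 and k + 1 is coprime to r - 1, this forces c - i + 1 = k + 1, i.e. i = 1
and c = k + 1, and then λ_1 - j = r - 1. But c = k + 1 means j ≤ λ_{k+1}, so
λ_1 - λ_{k+1} ≤ λ_1 - j < r, contradicting admissibility.
-/

open Finset

/-- The conjugate partition `λ'_j` of the partition with parts `lam 1, …, lam n`. -/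
def colLength (lam : ℕ → ℕ) (n j : ℕ) : ℕ := #{m ∈ Icc 1 n | j ≤ lam m}

theorem colLength_le (lam : ℕ → ℕ) (n j : ℕ) : colLength lam n j ≤ n := by
  simpa [colLength] using card_filter_le (Icc 1 n) (fun m => j ≤ lam m)

theorem le_colLength {lam : ℕ → ℕ} (hlam : AntitoneOn lam {x | 1 ≤ x}) {n i j : ℕ}
    (hi : 1 ≤ i) (hin : i ≤ n) (hj : j ≤ lam i) : i ≤ colLength lam n j := by
  have hsub : Icc 1 i ⊆ {m ∈ Icc 1 n | j ≤ lam m} := fun m hm => by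
    obtain ⟨h1m, hmi⟩ := mem_Icc.mp hm
    exact mem_filter.mpr ⟨mem_Icc.mpr ⟨h1m, hmi.trans hin⟩, hj.trans (hlam h1m hi hmi)⟩
  simpa [colLength] using card_le_card hsub

theorem le_of_colLength_eq {lam : ℕ → ℕ} {n j : ℕ} (h : colLength lam n j = n) :
    ∀ m ∈ Icc 1 n, j ≤ lam m :=
  filter_card_eq (by simpa [colLength] using h)

theorem Int.eq_and_eq_of_mul_eq_mul_of_isCoprime {n d a b : ℤ} (hcop : IsCoprime n d)
    (ha : 0 < a) (han : a ≤ n) (h : a * d = b * n) : a = n ∧ b = d := by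
  have hna : n ∣ a := hcop.dvd_of_dvd_mul_right ⟨b, by rw [h, mul_comm]⟩
  have hn : a = n := le_antisymm han (Int.le_of_dvd ha hna)
  subst hn
  exact ⟨rfl, (mul_right_cancel₀ ha.ne' (by rw [← h, mul_comm])).symm⟩

theorem specialization_denominator_ne_zero {k r : ℕ} (hr : 1 ≤ r)
    (hcop : Nat.Coprime (k + 1) (r - 1)) {lam : ℕ → ℕ} (hlam : AntitoneOn lam {x | 1 ≤ x})
    (hadm : lam (1 + k) + r ≤ lam 1) {i j : ℕ} (hi : 1 ≤ i) (hik : i ≤ k + 1)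
    (hji : j ≤ lam i) :
    ((colLength lam (k + 1) j : ℚ) - i + 1) * (-((r : ℚ) - 1) / ((k : ℚ) + 1))
      + lam i - j ≠ 0 := by
  set c := colLength lam (k + 1) j
  have hic : i ≤ c := le_colLength hlam hi hik hji
  have hck : c ≤ k + 1 := colLength_le lam (k + 1) j
  have hcopZ : IsCoprime ((k : ℤ) + 1) ((r : ℤ) - 1) := by
    rw [Int.isCoprime_iff_gcd_eq_one, ← Nat.cast_one (R := ℤ), ← Nat.cast_sub hr]
    exact_mod_cast hcop
  intro h
  have hZ : ((c : ℤ) - i + 1) * ((r : ℤ) - 1) = ((lam i : ℤ) - j) * ((k : ℤ) + 1) := by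
    field_simp at h
    exact_mod_cast (by linarith : ((c : ℚ) - i + 1) * ((r : ℚ) - 1) = ((lam i : ℚ) - j) * (k + 1))
  obtain ⟨hfull, hhook⟩ :=
    Int.eq_and_eq_of_mul_eq_mul_of_isCoprime hcopZ (by omega) (by omega) hZ
  have hjk : j ≤ lam (k + 1) :=
    le_of_colLength_eq (n := k + 1) (by omega) (k + 1) (mem_Icc.mpr ⟨by omega, le_rfl⟩)
  obtain rfl : i = 1 := by omega
  rw [Nat.add_comm 1 k] at hadm
  omega

theorem specialization_vanishes_general (k r : ℕ) (hr : 2 ≤ r)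
    (hcop : Nat.Coprime (k + 1) (r - 1))
    (β : ℚ) (hβ : β = -((r : ℚ) - 1) / ((k : ℚ) + 1))
    (lam : ℕ → ℕ)
    (hmono : ∀ i, 1 ≤ i → lam (i + 1) ≤ lam i)
    (hadm : lam (1 + k) + r ≤ lam 1)
    (conj : ℕ → ℕ)
    (hconj : ∀ j, conj j = ((Finset.Icc 1 (k + 1)).filter (fun m => j ≤ lam m)).card) :
    ((((k : ℚ) + 1) - 1 + 1) * β + (r : ℚ) - 1 = 0) ∧
    (∀ i j : ℕ, 1 ≤ i → i ≤ k + 1 → 1 ≤ j → j ≤ lam i →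
      ((conj j : ℚ) - (i : ℚ) + 1) * β + (lam i : ℚ) - (j : ℚ) ≠ 0) ∧
    (∏ i ∈ Finset.Icc 1 (k + 1), ∏ j ∈ Finset.Icc 1 (lam i),
      ((((k : ℚ) + 1) - (i : ℚ) + 1) * β + (j : ℚ) - 1) /
        (((conj j : ℚ) - (i : ℚ) + 1) * β + (lam i : ℚ) - (j : ℚ))
      = 0) := by
  have hnum : (((k : ℚ) + 1) - 1 + 1) * β + (r : ℚ) - 1 = 0 := by
    rw [hβ]; field_simp; ring
  refine ⟨hnum, fun i j hi hik _ hji => ?_, ?_⟩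
  · rw [hconj, hβ]
    exact specialization_denominator_ne_zero (by omega) hcop
      (antitoneOn_nat_Ici_of_succ_le hmono) hadm hi hik hji
  · refine prod_eq_zero (i := 1) (by simp) (prod_eq_zero (i := r) (by simp; omega) ?_)
    rw [div_eq_zero_iff, Nat.cast_one]
    exact Or.inl hnum

/-- For a (k,r,k+1)-admissible partition λ in n = k+1 variables and
β = -(r-1)/(k+1), in the specialization formula
P_λ(1,...,1;β) = ∏_{(i,j)∈λ} ((n-i+1)β + j - 1)/((λ'_j - i + 1)β + λ_i - j)
the numerator factor at the node (1,r) vanishes, no denominator factor vanishes,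
and hence the whole product is 0. -/
theorem specialization_vanishes (k r : ℕ) (hk : 1 ≤ k) (hr : 2 ≤ r)
    (hcop : Nat.Coprime (k + 1) (r - 1))
    (β : ℚ) (hβ : β = -((r : ℚ) - 1) / ((k : ℚ) + 1))
    (lam : ℕ → ℕ)
    (hmono : ∀ i, 1 ≤ i → lam (i + 1) ≤ lam i)
    (hadm : lam (1 + k) + r ≤ lam 1)
    (conj : ℕ → ℕ)
    (hconj : ∀ j, conj j = ((Finset.Icc 1 (k + 1)).filter (fun m => j ≤ lam m)).card) :
    ((((k : ℚ) + 1) - 1 + 1) * β + (r : ℚ) - 1 = 0) ∧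
    (∀ i j : ℕ, 1 ≤ i → i ≤ k + 1 → 1 ≤ j → j ≤ lam i →
      ((conj j : ℚ) - (i : ℚ) + 1) * β + (lam i : ℚ) - (j : ℚ) ≠ 0) ∧
    (∏ i ∈ Finset.Icc 1 (k + 1), ∏ j ∈ Finset.Icc 1 (lam i),
      ((((k : ℚ) + 1) - (i : ℚ) + 1) * β + (j : ℚ) - 1) /
        (((conj j : ℚ) - (i : ℚ) + 1) * β + (lam i : ℚ) - (j : ℚ))
      = 0) :=
  specialization_vanishes_general k r hr hcop β hβ lam hmono hadm conj hconj
end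

section
/- A symmetric polynomial P in n variables vanishes whenever x_1 = ... = x_{k+1} if and only if for every j ≥ 0 the polynomial (∂_n^j P)(x_1,...,x_{n-1},0) in n-1 variables vanishes whenever x_1 = ... = x_{k+1}, provided n ≥ k+2. -/
/-!
Since `k < n`, the last variable is not among the first `k + 1`, so the vanishing condition says
that for every `y` whose first `k + 1` coordinates agree, the one-variable polynomial
`t ↦ P(y, t)` is identically zero. Over `ℂ` a polynomial vanishes iff all its derivatives vanish
at `0` (Taylor expansion in characteristic zero), and the `j`-th derivative of `t ↦ P(y, t)` at
`0` is `(∂ₙʲ P)(y, 0)`.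
-/

open MvPolynomial Polynomial

namespace Polynomial

theorem eq_zero_iff_forall_iterate_derivative_eval_zero {R : Type*} [CommSemiring R]
    [IsAddTorsionFree R] {p : R[X]} :
    p = 0 ↔ ∀ j, (derivative^[j] p).eval 0 = 0 := by
  refine ⟨fun h j => by simp [h], fun h => ext fun m => ?_⟩
  have hm := h m
  rw [← coeff_zero_eq_eval_zero, coeff_iterate_derivative, zero_add,
    Nat.descFactorial_self] at hm
  exact (nsmul_eq_zero_iff_right m.factorial_ne_zero).1 hm

end Polynomial

namespace MvPolynomial

variable {R : Type*} [CommSemiring R] {n : ℕ}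

/-- `P(y, X)`: the restriction of `P` to the line `t ↦ (y, t)`. -/
noncomputable def evalInit (y : Fin n → R) : MvPolynomial (Fin (n + 1)) R →ₐ[R] R[X] :=
  aeval (Fin.snoc (fun i => Polynomial.C (y i)) Polynomial.X)

@[simp]
theorem evalInit_X_castSucc (y : Fin n → R) (i : Fin n) :
    evalInit y (X i.castSucc) = Polynomial.C (y i) := by
  simp [evalInit]

@[simp]
theorem evalInit_X_last (y : Fin n → R) : evalInit y (X (Fin.last n)) = Polynomial.X := by
  simp [evalInit]

theorem eval_evalInit (y : Fin n → R) (t : R) (P : MvPolynomial (Fin (n + 1)) R) :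
    (evalInit y P).eval t = eval (Fin.snoc y t) P := by
  have : (Polynomial.aeval t).comp (evalInit y) = aeval (Fin.snoc y t) :=
    algHom_ext fun i => Fin.lastCases (by simp) (by simp) i
  simpa using DFunLike.congr_fun this P

theorem evalInit_pderiv_last (y : Fin n → R) (P : MvPolynomial (Fin (n + 1)) R) :
    evalInit y (pderiv (Fin.last n) P) = derivative (evalInit y P) := by
  induction P using MvPolynomial.induction_on with
  | C a => simp [evalInit]
  | add p q hp hq => simp [hp, hq]
  | mul_X p i hp =>
    simp only [pderiv_mul, map_add, map_mul, hp, derivative_mul]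
    refine Fin.lastCases ?_ (fun i => ?_) i
    · simp
    · simp [pderiv_X_of_ne (Fin.castSucc_lt_last i).ne]

theorem evalInit_iterate_pderiv_last (y : Fin n → R) (P : MvPolynomial (Fin (n + 1)) R)
    (j : ℕ) : evalInit y ((pderiv (Fin.last n))^[j] P) = derivative^[j] (evalInit y P) :=
  Function.Semiconj.iterate_right (evalInit_pderiv_last y) j P

theorem evalInit_eq_zero_iff {K : Type*} [CommRing K] [IsDomain K] [Infinite K]
    (y : Fin n → K) (P : MvPolynomial (Fin (n + 1)) K) :
    evalInit y P = 0 ↔ ∀ t, eval (Fin.snoc y t) P = 0 := by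
  simp only [← eval_evalInit]
  exact ⟨fun h t => by simp [h], fun h => Polynomial.funext (by simpa using h)⟩

end MvPolynomial

def FirstCoordsEq {α : Type*} {m : ℕ} (k : ℕ) (x : Fin m → α) : Prop :=
  ∀ a b : Fin m, (a : ℕ) ≤ k → (b : ℕ) ≤ k → x a = x b

theorem firstCoordsEq_snoc_iff {α : Type*} {k n : ℕ} (hk : k < n) (y : Fin n → α) (t : α) :
    FirstCoordsEq k (Fin.snoc y t : Fin (n + 1) → α) ↔ FirstCoordsEq k y := by
  refine ⟨fun h a b ha hb => by simpa using h a.castSucc b.castSucc ha hb, fun h => ?_⟩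
  have castSucc_of_le {a : Fin (n + 1)} (ha : (a : ℕ) ≤ k) : ∃ a' : Fin n, a'.castSucc = a :=
    Fin.exists_castSucc_eq.2 (Fin.val_ne_iff.1 (by rw [Fin.val_last]; omega))
  intro a b ha hb
  obtain ⟨a, rfl⟩ := castSucc_of_le ha
  obtain ⟨b, rfl⟩ := castSucc_of_le hb
  simpa using h a b ha hb

theorem vanishing_iff_derivatives_vanish_general (k n : ℕ) (hn : k + 2 ≤ n + 1)
    (P : MvPolynomial (Fin (n + 1)) ℂ) :
    (∀ x : Fin (n + 1) → ℂ,
        (∀ a b : Fin (n + 1), (a : ℕ) ≤ k → (b : ℕ) ≤ k → x a = x b) →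
        eval x P = 0)
    ↔ (∀ j : ℕ, ∀ y : Fin n → ℂ,
        (∀ a b : Fin n, (a : ℕ) ≤ k → (b : ℕ) ≤ k → y a = y b) →
        eval (Fin.snoc y 0) ((pderiv (Fin.last n))^[j] P) = 0) := by
  have hkn : k < n := by omega
  calc (∀ x : Fin (n + 1) → ℂ, FirstCoordsEq k x → eval x P = 0)
      ↔ ∀ y : Fin n → ℂ, FirstCoordsEq k y → ∀ t, eval (Fin.snoc y t) P = 0 := by
        refine ⟨fun h y hy t => h _ ((firstCoordsEq_snoc_iff hkn y t).2 hy), fun h x hx => ?_⟩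
        rw [← Fin.snoc_init_self x] at hx ⊢
        exact h _ ((firstCoordsEq_snoc_iff hkn _ _).1 hx) _
    _ ↔ ∀ y : Fin n → ℂ, FirstCoordsEq k y → evalInit y P = 0 := by
        simp only [evalInit_eq_zero_iff]
    _ ↔ ∀ y : Fin n → ℂ, FirstCoordsEq k y →
          ∀ j, eval (Fin.snoc y 0) ((pderiv (Fin.last n))^[j] P) = 0 := by
        simp only [eq_zero_iff_forall_iterate_derivative_eval_zero,
          ← evalInit_iterate_pderiv_last, eval_evalInit]
    _ ↔ _ := ⟨fun h j y hy => h y hy j, fun h y hy j => h j y hy⟩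

/-- For n+1 ≥ k+2, a symmetric polynomial P in n+1 variables
vanishes whenever the first k+1 variables coincide iff for every j ≥ 0 the
restriction (∂_{last}^j P)|_{x_{last}=0}, a polynomial in the first n variables,
vanishes whenever its first k+1 variables coincide. -/
theorem vanishing_iff_derivatives_vanish (k n : ℕ) (hn : k + 2 ≤ n + 1)
    (P : MvPolynomial (Fin (n + 1)) ℂ) (hsym : P.IsSymmetric) :
    (∀ x : Fin (n + 1) → ℂ,
        (∀ a b : Fin (n + 1), (a : ℕ) ≤ k → (b : ℕ) ≤ k → x a = x b) →
        eval x P = 0)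
    ↔ (∀ j : ℕ, ∀ y : Fin n → ℂ,
        (∀ a b : Fin n, (a : ℕ) ≤ k → (b : ℕ) ≤ k → y a = y b) →
        eval (Fin.snoc y 0) ((pderiv (Fin.last n))^[j] P) = 0) :=
  vanishing_iff_derivatives_vanish_general k n hn P
end
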